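/- arXiv:2311.00007 — 2 statements merged into one kernel-verified Lean document; each statement's English description precedes it below -/
import Mathlib

section
/- Gordan's lemma: for any finitely generated rational polyhedral cone C in ℝ^n, the monoid of lattice points C ∩ ℤ^n is finitely generated as a commutative monoid. -/
/-- Gordan's lemma: for a finitely generated rational polyhedral cone `C ⊆ ℝ^n`
(the set of nonnegative real combinations of finitely many integer vectors),
the monoid of lattice points of `C` is finitely generated as a commutative monoid. -/
theorem gordan_lemma (n : ℕ) {ι : Type} [Fintype ι] (v : ι → (Fin n → ℤ)) :
    ∃ S : Finset (Fin n → ℤ),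
      (AddSubmonoid.closure (S : Set (Fin n → ℤ)) : Set (Fin n → ℤ)) =
        {z : Fin n → ℤ | ∃ c : ι → ℝ, (∀ i, 0 ≤ c i) ∧
          (fun j => (z j : ℝ)) = ∑ i, c i • (fun j => (v i j : ℝ))} := by
  classical
  set C : Set (Fin n → ℤ) := {z : Fin n → ℤ | ∃ c : ι → ℝ, (∀ i, 0 ≤ c i) ∧
    (fun j => (z j : ℝ)) = ∑ i, c i • (fun j => (v i j : ℝ))} with hC
  set D : Set (Fin n → ℤ) := {z : Fin n → ℤ | ∃ t : ι → ℝ, (∀ i, 0 ≤ t i ∧ t i ≤ 1) ∧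
    (fun j => (z j : ℝ)) = ∑ i, t i • (fun j => (v i j : ℝ))} with hD
  have hDfin : D.Finite := by
    apply Set.Finite.subset (Set.Finite.pi (fun j : Fin n =>
      Set.finite_Icc (-(∑ i, |v i j|)) (∑ i, |v i j|)))
    rintro z ⟨t, ht, hz⟩
    intro j _
    have hzj : (z j : ℝ) = ∑ i, t i * (v i j : ℝ) := by
      have := congrFun hz j
      simpa using this
    have habs : |(z j : ℝ)| ≤ ∑ i, (|v i j| : ℝ) := by
      rw [hzj]
      refine (Finset.abs_sum_le_sum_abs _ _).trans ?_
      refine Finset.sum_le_sum fun i _ => ?_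
      rw [abs_mul]
      refine mul_le_of_le_one_left (abs_nonneg _) ?_
      rw [abs_of_nonneg (ht i).1]; exact (ht i).2
    have habs' : |z j| ≤ ∑ i, |v i j| := by
      have : ((|z j| : ℤ) : ℝ) ≤ ((∑ i, |v i j| : ℤ) : ℝ) := by push_cast; exact habs
      exact_mod_cast this
    exact abs_le.mp habs'
  refine ⟨hDfin.toFinset, ?_⟩
  -- C is an additive submonoid
  have hzero : (0 : Fin n → ℤ) ∈ C := by
    refine ⟨fun _ => 0, fun i => le_refl 0, ?_⟩
    funext j; simp
  have hadd : ∀ a b : Fin n → ℤ, a ∈ C → b ∈ C → a + b ∈ C := by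
    rintro a b ⟨c, hc, ha⟩ ⟨d, hd, hb⟩
    refine ⟨c + d, fun i => add_nonneg (hc i) (hd i), ?_⟩
    funext j
    have h1 := congrFun ha j
    have h2 := congrFun hb j
    simp only [Finset.sum_apply, Pi.smul_apply, smul_eq_mul] at h1 h2 ⊢
    simp only [Pi.add_apply, Int.cast_add, h1, h2, add_mul, Finset.sum_add_distrib]
  let M : AddSubmonoid (Fin n → ℤ) :=
    { carrier := C
      zero_mem' := hzero
      add_mem' := fun {a b} ha hb => hadd a b ha hb }
  have hDC : D ⊆ C := by
    rintro z ⟨t, ht, hz⟩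
    exact ⟨t, fun i => (ht i).1, hz⟩
  have hvD : ∀ i, v i ∈ D := by
    intro i
    refine ⟨fun k => if k = i then 1 else 0, fun k => by dsimp only; split <;> norm_num, ?_⟩
    funext j
    simp [Finset.sum_apply, Pi.smul_apply, ite_smul, ite_apply, Finset.sum_ite_eq']
  apply subset_antisymm
  · have hle : AddSubmonoid.closure (hDfin.toFinset : Set (Fin n → ℤ)) ≤ M := by
      rw [AddSubmonoid.closure_le]
      intro z hz
      exact hDC (hDfin.mem_toFinset.mp (by exact_mod_cast hz))
    exact hle
  · rintro z ⟨c, hc, hz⟩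
    set m : ι → ℕ := fun i => (⌊c i⌋).toNat with hm
    have hmf : ∀ i, ((m i : ℤ) : ℝ) = (⌊c i⌋ : ℝ) := by
      intro i
      norm_cast
      exact Int.toNat_of_nonneg (Int.floor_nonneg.mpr (hc i))
    have hrD : (z - ∑ i, m i • v i) ∈ D := by
      refine ⟨fun i => Int.fract (c i),
        fun i => ⟨Int.fract_nonneg _, le_of_lt (Int.fract_lt_one _)⟩, ?_⟩
      funext j
      have hzj : (z j : ℝ) = ∑ i, c i * (v i j : ℝ) := by
        have := congrFun hz j
        simpa using this
      simp only [Pi.sub_apply, Finset.sum_apply, Pi.smul_apply, smul_eq_mul]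
      push_cast
      rw [hzj, ← Finset.sum_sub_distrib]
      refine Finset.sum_congr rfl fun i _ => ?_
      rw [nsmul_eq_mul,
        show ((m i : ℤ)) = ⌊c i⌋ from Int.toNat_of_nonneg (Int.floor_nonneg.mpr (hc i)),
        Int.fract]
      push_cast
      ring
    have hsplit : z = (z - ∑ i, m i • v i) + ∑ i, m i • v i := by ring
    rw [hsplit]
    refine AddSubmonoid.add_mem _ ?_ ?_
    · exact AddSubmonoid.subset_closure (by simpa using hDfin.mem_toFinset.mpr hrD)
    · refine AddSubmonoid.sum_mem _ fun i _ => ?_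
      exact AddSubmonoid.nsmul_mem _
        (AddSubmonoid.subset_closure (by simpa using hDfin.mem_toFinset.mpr (hvD i))) _
end

section
/- The Morse lemma for hyperbolic spaces: in a δ-hyperbolic geodesic metric space, there is a constant M depending only on δ, Λ, and C such that any (Λ, C)-quasi-geodesic segment lies within Hausdorff distance M of the geodesic joining its endpoints. -/
open Set

/-- `f` restricted to `[a,b]` is a geodesic segment (unit-speed isometric embedding). -/
def IsGeodesicOn {X : Type*} [MetricSpace X] (f : ℝ → X) (a b : ℝ) : Prop :=
  ∀ s ∈ Icc a b, ∀ t ∈ Icc a b, dist (f s) (f t) = |s - t|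

/-- A geodesic metric space: any two points are joined by a geodesic segment. -/
def IsGeodesicSpace (X : Type*) [MetricSpace X] : Prop :=
  ∀ x y : X, ∃ (f : ℝ → X) (a b : ℝ), a ≤ b ∧ f a = x ∧ f b = y ∧ IsGeodesicOn f a b

/-- A geodesic space is `δ`-hyperbolic if every geodesic triangle is `δ`-thin: each side
is contained in the `δ`-neighborhood of the union of the other two. -/
def IsDeltaHyperbolic (X : Type*) [MetricSpace X] (δ : ℝ) : Prop :=
  ∀ (x y z : X) (f g h : ℝ → X) (a b a' b' a'' b'' : ℝ),
    IsGeodesicOn f a b → f a = x → f b = y →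
    IsGeodesicOn g a' b' → g a' = y → g b' = z →
    IsGeodesicOn h a'' b'' → h a'' = x → h b'' = z →
    ∀ p ∈ f '' Icc a b, ∃ q ∈ g '' Icc a' b' ∪ h '' Icc a'' b'', dist p q ≤ δ

/-- `f` restricted to `[a,b]` is a `(Λ, C)`-quasi-geodesic. -/
def IsQuasiGeodesicOn {X : Type*} [MetricSpace X] (Λ C : ℝ) (f : ℝ → X) (a b : ℝ) : Prop :=
  ∀ s ∈ Icc a b, ∀ t ∈ Icc a b,
    (1 / Λ) * |s - t| - C ≤ dist (f s) (f t) ∧ dist (f s) (f t) ≤ Λ * |s - t| + C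

namespace MorseAux

lemma abs_min_sub_min (x y c : ℝ) : |min x c - min y c| ≤ |x - y| := by
  rcases min_cases x c with ⟨h1, h1'⟩ | ⟨h1, h1'⟩ <;>
  rcases min_cases y c with ⟨h2, h2'⟩ | ⟨h2, h2'⟩ <;>
  rcases abs_cases (x - y) with ⟨he, hs⟩ | ⟨he, hs⟩ <;>
  rw [h1, h2, he] <;> rw [abs_sub_le_iff] <;> constructor <;> linarith

lemma abs_max_sub_max (x y c : ℝ) : |max c x - max c y| ≤ |x - y| := by
  rcases max_cases c x with ⟨h1, h1'⟩ | ⟨h1, h1'⟩ <;>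
  rcases max_cases c y with ⟨h2, h2'⟩ | ⟨h2, h2'⟩ <;>
  rcases abs_cases (x - y) with ⟨he, hs⟩ | ⟨he, hs⟩ <;>
  rw [h1, h2, he] <;> rw [abs_sub_le_iff] <;> constructor <;> linarith

lemma sqrt_add_le {x y : ℝ} (hx : 0 ≤ x) (hy : 0 ≤ y) :
    Real.sqrt (x + y) ≤ Real.sqrt x + Real.sqrt y := by
  have h1 := Real.sq_sqrt hx
  have h2 := Real.sq_sqrt hy
  have h3 := Real.sqrt_nonneg x
  have h4 := Real.sqrt_nonneg y
  have h : x + y ≤ (Real.sqrt x + Real.sqrt y) ^ 2 := by nlinarith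
  calc Real.sqrt (x + y) ≤ Real.sqrt ((Real.sqrt x + Real.sqrt y) ^ 2) := Real.sqrt_le_sqrt h
    _ = Real.sqrt x + Real.sqrt y := Real.sqrt_sq (by linarith)

lemma le_add_sqrt {x K L : ℝ} (hx : 0 ≤ x) (hK : 0 ≤ K) (hL : 0 ≤ L)
    (h : x ^ 2 ≤ K * x + L) : x ≤ K + Real.sqrt L := by
  by_contra hcon
  push_neg at hcon
  have h1 := Real.sq_sqrt hL
  have h2 := Real.sqrt_nonneg L
  nlinarith

lemma clog_le_real {n : ℕ} (hn : 1 ≤ n) :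
    (Nat.clog 2 n : ℝ) ≤ Real.log n / Real.log 2 + 1 := by
  have hlog2 : 0 < Real.log 2 := Real.log_pos (by norm_num)
  rcases eq_or_lt_of_le hn with h | h
  · rw [← h]
    norm_num [Nat.clog_one_right, Real.log_one]
  · have h2 : 2 ≤ n := h
    have hp : (2 : ℕ) ^ (Nat.clog 2 n - 1) < n := Nat.pow_pred_clog_lt_self (by norm_num) h
    have hc : 1 ≤ Nat.clog 2 n := Nat.clog_pos (by norm_num) h2
    have hr : ((2 : ℝ)) ^ (Nat.clog 2 n - 1) ≤ (n : ℝ) := by exact_mod_cast hp.le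
    have hlog := Real.log_le_log (by positivity) hr
    rw [Real.log_pow] at hlog
    have hcast : ((Nat.clog 2 n - 1 : ℕ) : ℝ) = (Nat.clog 2 n : ℝ) - 1 := by
      rw [Nat.cast_sub hc]; simp
    rw [hcast] at hlog
    have hdiv : (Nat.clog 2 n : ℝ) - 1 ≤ Real.log n / Real.log 2 := by
      rw [le_div_iff₀ hlog2]
      linarith
    linarith

lemma chain_lemma {X : Type} [MetricSpace X] {δ : ℝ} (hδ : 0 ≤ δ)
    (hgeo : IsGeodesicSpace X) (hhyp : IsDeltaHyperbolic X δ) {G : ℝ} :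
    ∀ n : ℕ, 1 ≤ n → ∀ c : ℕ → X, (∀ i < n, dist (c i) (c (i + 1)) ≤ G) →
    ∀ (γ : ℝ → X) (u v : ℝ), IsGeodesicOn γ u v → γ u = c 0 → γ v = c n →
    ∀ p ∈ γ '' Icc u v, ∃ i ≤ n, dist p (c i) ≤ δ * (Nat.clog 2 n) + G := by
  intro n
  induction n using Nat.strong_induction_on with
  | _ n IH =>
  intro hn c hgap γ u v hγ hu hv p hp
  obtain ⟨w, hw, rfl⟩ := hp
  have huv : u ≤ v := le_trans hw.1 hw.2
  rcases eq_or_lt_of_le hn with h1 | h2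
  · -- n = 1
    subst h1
    refine ⟨0, Nat.zero_le _, ?_⟩
    have hd : dist (γ w) (γ u) = |w - u| := hγ w hw u ⟨le_refl u, huv⟩
    have hG : dist (c 0) (c 1) ≤ G := hgap 0 (by omega)
    have hdist : dist (γ u) (γ v) = |u - v| := hγ u ⟨le_refl u, huv⟩ v ⟨huv, le_refl v⟩
    rw [← hu, hd]
    have e1 : |w - u| = w - u := abs_of_nonneg (by linarith [hw.1])
    have e2 : |u - v| = v - u := by rw [abs_sub_comm]; exact abs_of_nonneg (by linarith)
    have e3 : dist (γ u) (γ v) ≤ G := by rw [hu, hv]; exact hG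
    simp only [Nat.clog_one_right, Nat.cast_zero, mul_zero, zero_add]
    rw [hdist, e2] at e3
    rw [e1]
    linarith [hw.2]
  · have hn2 : 2 ≤ n := h2
    set m := (n + 1) / 2 with hm
    have hm1 : 1 ≤ m := by omega
    have hmn : m < n := by omega
    have hnm1 : 1 ≤ n - m := by omega
    have hnmm : n - m ≤ m := by omega
    have e1 : (n + 2 - 1) / 2 = m := by omega
    have hclog : Nat.clog 2 n = Nat.clog 2 m + 1 := by
      rw [Nat.clog_of_two_le (by norm_num) hn2, e1]
    have hclog2 : Nat.clog 2 (n - m) ≤ Nat.clog 2 m := Nat.clog_mono_right _ hnmm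
    obtain ⟨g₂, a₂, b₂, hab₂, hga₂, hgb₂, hgeo₂⟩ := hgeo (c n) (c m)
    obtain ⟨h₃, a₃, b₃, hab₃, hha₃, hhb₃, hgeo₃⟩ := hgeo (c 0) (c m)
    obtain ⟨q, hq, hdq⟩ := hhyp (c 0) (c n) (c m) γ g₂ h₃ u v a₂ b₂ a₃ b₃ hγ hu hv
      hgeo₂ hga₂ hgb₂ hgeo₃ hha₃ hhb₃ (γ w) ⟨w, hw, rfl⟩
    have key : ∃ i ≤ n, dist q (c i) ≤ δ * (Nat.clog 2 m) + G := by
      rcases hq with hq | hq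
      · -- q on geodesic from c n to c m : use reversed chain
        have hgaps : ∀ j < n - m, dist (c (n - j)) (c (n - (j + 1))) ≤ G := by
          intro j hj
          have e2 : n - (j + 1) + 1 = n - j := by omega
          rw [dist_comm, ← e2]
          exact hgap _ (by omega)
        obtain ⟨i, hi, hqi⟩ := IH (n - m) (by omega) hnm1 (fun j => c (n - j)) hgaps
          g₂ a₂ b₂ hgeo₂ (by simpa using hga₂) (by rw [hgb₂]; congr 1; omega) q hq
        refine ⟨n - i, by omega, ?_⟩
        refine le_trans hqi ?_
        have hle : (Nat.clog 2 (n - m) : ℝ) ≤ (Nat.clog 2 m : ℝ) := by exact_mod_cast hclog2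
        have := mul_le_mul_of_nonneg_left hle hδ
        linarith
      · obtain ⟨i, hi, hqi⟩ := IH m hmn hm1 c (fun i hi => hgap i (by omega))
          h₃ a₃ b₃ hgeo₃ hha₃ hhb₃ q hq
        exact ⟨i, by omega, hqi⟩
    obtain ⟨i, hi, hqi⟩ := key
    refine ⟨i, hi, ?_⟩
    have hcast : (Nat.clog 2 n : ℝ) = (Nat.clog 2 m : ℝ) + 1 := by exact_mod_cast hclog
    calc dist (γ w) (c i) ≤ dist (γ w) q + dist q (c i) := dist_triangle _ _ _
      _ ≤ δ + (δ * (Nat.clog 2 m) + G) := add_le_add hdq hqi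
      _ = δ * ((Nat.clog 2 m : ℝ) + 1) + G := by ring
      _ = δ * (Nat.clog 2 n) + G := by rw [hcast]

end MorseAux
noncomputable def morseM1 (δ Λ C : ℝ) : ℝ :=
  max 1 ((2 * δ * Real.sqrt (6 * Λ + 2) / Real.log 2 +
    Real.sqrt (1 + δ + Λ + C + 2 * δ * Real.sqrt (2 * Λ + Λ * C + 5) / Real.log 2)) ^ 2)

lemma one_le_morseM1 (δ Λ C : ℝ) : 1 ≤ morseM1 δ Λ C := le_max_left _ _

lemma contOn_infDist {X : Type} [MetricSpace X] {g : ℝ → X} {a' b' : ℝ}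
    (hg : IsGeodesicOn g a' b') (S : Set X) :
    ContinuousOn (fun u => Metric.infDist (g u) S) (Icc a' b') := by
  refine LipschitzOnWith.continuousOn (K := 1) ?_
  rw [lipschitzOnWith_iff_dist_le_mul]
  intro x hx y hy
  have h1 : dist (Metric.infDist (g x) S) (Metric.infDist (g y) S) ≤ dist (g x) (g y) :=
    le_trans ((Metric.lipschitz_infDist_pt S).dist_le_mul (g x) (g y)) (by simp)
  have h2 : dist (g x) (g y) = dist x y := by rw [hg x hx y hy, Real.dist_eq]
  simpa [h2] using h1

set_option maxHeartbeats 1000000 in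
lemma step1 {X : Type} [MetricSpace X] {δ Λ C : ℝ} (hδ : 0 ≤ δ) (hΛ : 1 ≤ Λ) (hC : 0 ≤ C)
    (hgeo : IsGeodesicSpace X) (hhyp : IsDeltaHyperbolic X δ)
    {f : ℝ → X} {a b : ℝ} (hab : a ≤ b) (hf : IsQuasiGeodesicOn Λ C f a b)
    {g : ℝ → X} {a' b' : ℝ} (hab' : a' ≤ b') (hg : IsGeodesicOn g a' b')
    (hga : g a' = f a) (hgb : g b' = f b) :
    ∀ u ∈ Icc a' b', Metric.infDist (g u) (f '' Icc a b) ≤ morseM1 δ Λ C := by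
  have hΛ0 : (0:ℝ) < Λ := by linarith
  have hTne : (f '' Icc a b).Nonempty := ⟨f a, a, ⟨le_refl a, hab⟩, rfl⟩
  obtain ⟨u₀, hu₀, hmax⟩ := isCompact_Icc.exists_isMaxOn (α := ℝ)
    (Set.nonempty_Icc.mpr hab') (contOn_infDist hg (f '' Icc a b))
  have hmax' : ∀ u ∈ Icc a' b',
      Metric.infDist (g u) (f '' Icc a b) ≤ Metric.infDist (g u₀) (f '' Icc a b) :=
    fun u hu => hmax hu
  suffices h : Metric.infDist (g u₀) (f '' Icc a b) ≤ morseM1 δ Λ C by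
    intro u hu; exact le_trans (hmax' u hu) h
  set D := Metric.infDist (g u₀) (f '' Icc a b) with hDdef
  have hD0 : 0 ≤ D := Metric.infDist_nonneg
  clear_value D
  by_cases hD1 : D ≤ 1
  · exact le_trans hD1 (one_le_morseM1 δ Λ C)
  push_neg at hD1
  set u₁ := max a' (u₀ - 2 * D) with hu₁def
  set u₂ := min b' (u₀ + 2 * D) with hu₂def
  have hu₁a : a' ≤ u₁ := le_max_left _ _
  have hu₁0 : u₁ ≤ u₀ := max_le hu₀.1 (by linarith)
  have hu₂0 : u₀ ≤ u₂ := le_min hu₀.2 (by linarith)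
  have hu₂b : u₂ ≤ b' := min_le_left _ _
  have hu₁I : u₁ ∈ Icc a' b' := ⟨hu₁a, le_trans hu₁0 hu₀.2⟩
  have hu₂I : u₂ ∈ Icc a' b' := ⟨le_trans hu₀.1 hu₂0, hu₂b⟩
  have hu₁r : u₀ - 2 * D ≤ u₁ := le_max_right _ _
  have hu₂r : u₂ ≤ u₀ + 2 * D := min_le_right _ _
  clear_value u₁ u₂
  have hs_ex : ∃ s ∈ Icc a b, dist (g u₁) (f s) ≤ D + 1 ∧
      (2 * D ≤ dist (g u₀) (g u₁) ∨ dist (g u₁) (f s) = 0) := by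
    rcases le_total a' (u₀ - 2 * D) with hc | hc
    · have hu₁eq : u₁ = u₀ - 2 * D := by rw [hu₁def]; exact max_eq_right hc
      have h2 : Metric.infDist (g u₁) (f '' Icc a b) < D + 1 :=
        lt_of_le_of_lt (hmax' u₁ hu₁I) (by linarith)
      obtain ⟨y, hy, hdy⟩ := (Metric.infDist_lt_iff hTne).mp h2
      obtain ⟨s, hs, rfl⟩ := hy
      refine ⟨s, hs, hdy.le, Or.inl ?_⟩
      have hgd : dist (g u₀) (g u₁) = |u₀ - u₁| := hg u₀ hu₀ u₁ hu₁I
      rw [hgd, hu₁eq, abs_of_nonneg (by linarith)]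
      linarith
    · have hu₁eq : u₁ = a' := by rw [hu₁def]; exact max_eq_left hc
      refine ⟨a, ⟨le_refl a, hab⟩, ?_, Or.inr ?_⟩ <;>
        rw [hu₁eq, hga, dist_self] <;> linarith
  obtain ⟨s, hsI, hsd, hs2⟩ := hs_ex
  have ht_ex : ∃ t ∈ Icc a b, dist (f t) (g u₂) ≤ D + 1 ∧
      (2 * D ≤ dist (g u₀) (g u₂) ∨ dist (f t) (g u₂) = 0) := by
    rcases le_total (u₀ + 2 * D) b' with hc | hc
    · have hu₂eq : u₂ = u₀ + 2 * D := by rw [hu₂def]; exact min_eq_right hc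
      have h2 : Metric.infDist (g u₂) (f '' Icc a b) < D + 1 :=
        lt_of_le_of_lt (hmax' u₂ hu₂I) (by linarith)
      obtain ⟨y, hy, hdy⟩ := (Metric.infDist_lt_iff hTne).mp h2
      obtain ⟨t, ht, rfl⟩ := hy
      refine ⟨t, ht, by rw [dist_comm]; exact hdy.le, Or.inl ?_⟩
      have hgd : dist (g u₀) (g u₂) = |u₀ - u₂| := hg u₀ hu₀ u₂ hu₂I
      rw [hgd, hu₂eq, abs_of_nonpos (by linarith)]
      linarith
    · have hu₂eq : u₂ = b' := by rw [hu₂def]; exact min_eq_left hc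
      refine ⟨b, ⟨hab, le_refl b⟩, ?_, Or.inr ?_⟩ <;>
        rw [hu₂eq, hgb, dist_self] <;> linarith
  obtain ⟨t, htI, htd, ht2⟩ := ht_ex
  obtain ⟨f₁, a₁, b₁, hab₁, hf₁a, hf₁b, hgeo₁⟩ := hgeo (g u₁) (f s)
  obtain ⟨f₃, a₃, b₃, hab₃, hf₃a, hf₃b, hgeo₃⟩ := hgeo (f t) (g u₂)
  have hL₁ : dist (g u₁) (f s) = b₁ - a₁ := by
    rw [← hf₁a, ← hf₁b, hgeo₁ a₁ ⟨le_refl _, hab₁⟩ b₁ ⟨hab₁, le_refl _⟩,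
      abs_of_nonpos (by linarith)]
    ring
  have hL₃ : dist (f t) (g u₂) = b₃ - a₃ := by
    rw [← hf₃a, ← hf₃b, hgeo₃ a₃ ⟨le_refl _, hab₃⟩ b₃ ⟨hab₃, le_refl _⟩,
      abs_of_nonpos (by linarith)]
    ring
  set k₁ := ⌈b₁ - a₁⌉₊ with hk₁def
  set k₂ := ⌈|t - s|⌉₊ with hk₂def
  set k₃ := ⌈b₃ - a₃⌉₊ with hk₃def
  set n := k₁ + k₂ + k₃ with hndef
  have hk₁L : b₁ - a₁ ≤ (k₁ : ℝ) := Nat.le_ceil _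
  have hk₂L : |t - s| ≤ (k₂ : ℝ) := Nat.le_ceil _
  have hk₃L : b₃ - a₃ ≤ (k₃ : ℝ) := Nat.le_ceil _
  have hk₁u : (k₁ : ℝ) < (b₁ - a₁) + 1 := Nat.ceil_lt_add_one (by linarith)
  have hk₂u : (k₂ : ℝ) < |t - s| + 1 := Nat.ceil_lt_add_one (abs_nonneg _)
  have hk₃u : (k₃ : ℝ) < (b₃ - a₃) + 1 := Nat.ceil_lt_add_one (by linarith)
  clear_value k₁ k₂ k₃
  clear_value n
  set c : ℕ → X := fun i =>
    if i < k₁ then f₁ (min (a₁ + i) b₁)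
    else if i ≤ k₁ + k₂ then f (s + ((i - k₁ : ℕ) : ℝ) * (t - s) / k₂)
    else f₃ (max a₃ (b₃ - ((n - i : ℕ) : ℝ))) with hcdef
  clear_value c
  have ceq₁ : ∀ i : ℕ, i ≤ k₁ → c i = f₁ (min (a₁ + i) b₁) := by
    intro i hi
    rcases lt_or_eq_of_le hi with h | h
    · simp only [hcdef]
      rw [if_pos h]
    · rw [h]
      simp only [hcdef]
      rw [if_neg (lt_irrefl k₁), if_pos (Nat.le_add_right k₁ k₂)]
      have e0 : ((k₁ - k₁ : ℕ) : ℝ) = 0 := by simp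
      rw [e0]
      have hmin : min (a₁ + (k₁ : ℝ)) b₁ = b₁ := min_eq_right (by linarith)
      rw [hmin, hf₁b]
      congr 1
      ring
  have ceq₂ : ∀ i : ℕ, k₁ ≤ i → i ≤ k₁ + k₂ →
      c i = f (s + ((i - k₁ : ℕ) : ℝ) * (t - s) / k₂) := by
    intro i h1 h2
    simp only [hcdef]
    rw [if_neg (by omega : ¬ i < k₁), if_pos h2]
  have ceq₃ : ∀ i : ℕ, k₁ + k₂ ≤ i → c i = f₃ (max a₃ (b₃ - ((n - i : ℕ) : ℝ))) := by
    intro i h1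
    rcases lt_or_eq_of_le h1 with h | h
    · simp only [hcdef]
      rw [if_neg (by omega : ¬ i < k₁), if_neg (by omega : ¬ i ≤ k₁ + k₂)]
    · subst h
      simp only [hcdef]
      rw [if_neg (by omega : ¬ k₁ + k₂ < k₁), if_pos (le_refl (k₁ + k₂))]
      have e1 : (k₁ + k₂ - k₁ : ℕ) = k₂ := by omega
      have e2 : (n - (k₁ + k₂) : ℕ) = k₃ := by omega
      rw [e1, e2]
      have hmax : max a₃ (b₃ - (k₃ : ℝ)) = a₃ := max_eq_left (by linarith)
      rw [hmax, hf₃a]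
      rcases Nat.eq_zero_or_pos k₂ with hk | hk
      · have hts : |t - s| ≤ 0 := by
          rw [hk] at hk₂L
          exact_mod_cast hk₂L
        have hst : t = s := by
          have h5 := abs_nonneg (t - s)
          have h6 : |t - s| = 0 := le_antisymm hts h5
          have := abs_eq_zero.mp h6
          linarith
        rw [hk, hst]
        push_cast
        norm_num
      · have hk2ne : ((k₂ : ℝ)) ≠ 0 := by
          have : (0:ℝ) < (k₂:ℝ) := by exact_mod_cast hk
          linarith
        congr 1
        field_simp
        ring
  have hc0 : c 0 = g u₁ := by
    rw [ceq₁ 0 (Nat.zero_le _)]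
    have e : min (a₁ + ((0:ℕ) : ℝ)) b₁ = a₁ := by
      push_cast
      rw [add_zero]
      exact min_eq_left hab₁
    rw [e, hf₁a]
  have hcn : c n = g u₂ := by
    rw [ceq₃ n (by omega)]
    have e : max a₃ (b₃ - ((n - n : ℕ) : ℝ)) = b₃ := by
      simp only [Nat.sub_self, Nat.cast_zero, sub_zero]
      exact max_eq_right hab₃
    rw [e, hf₃b]
  have hσmem : ∀ j : ℕ, j ≤ k₂ → s + (j : ℝ) * (t - s) / k₂ ∈ Icc a b := by
    intro j hj
    rcases Nat.eq_zero_or_pos k₂ with hk | hk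
    · have hj0 : j = 0 := by omega
      subst hj0
      simpa using hsI
    · have hk2pos : (0:ℝ) < k₂ := by exact_mod_cast hk
      have hθ0 : 0 ≤ (j : ℝ) / k₂ := by positivity
      have hθ1 : (j : ℝ) / k₂ ≤ 1 := by
        rw [div_le_one hk2pos]; exact_mod_cast hj
      have e : s + (j : ℝ) * (t - s) / k₂ = s + ((j : ℝ) / k₂) * (t - s) := by ring
      rw [e]
      constructor
      · linarith [mul_nonneg (by linarith : (0:ℝ) ≤ 1 - (j:ℝ)/k₂) (by linarith [hsI.1] : (0:ℝ) ≤ s - a),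
          mul_nonneg hθ0 (by linarith [htI.1] : (0:ℝ) ≤ t - a)]
      · linarith [mul_nonneg (by linarith : (0:ℝ) ≤ 1 - (j:ℝ)/k₂) (by linarith [hsI.2] : (0:ℝ) ≤ b - s),
          mul_nonneg hθ0 (by linarith [htI.2] : (0:ℝ) ≤ b - t)]
  have hgap : ∀ i < n, dist (c i) (c (i + 1)) ≤ Λ + C := by
    intro i hi
    have hi0 : (0:ℝ) ≤ (i:ℝ) := Nat.cast_nonneg i
    rcases lt_or_ge i k₁ with h | h
    · have hcast : ((i + 1 : ℕ) : ℝ) = (i : ℝ) + 1 := by push_cast; ring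
      rw [ceq₁ i h.le, ceq₁ (i + 1) h, hcast]
      have hm1 : min (a₁ + (i : ℝ)) b₁ ∈ Icc a₁ b₁ :=
        ⟨le_min (by linarith) hab₁, min_le_right _ _⟩
      have hm2 : min (a₁ + ((i : ℝ) + 1)) b₁ ∈ Icc a₁ b₁ :=
        ⟨le_min (by linarith) hab₁, min_le_right _ _⟩
      rw [hgeo₁ _ hm1 _ hm2]
      have hmm := MorseAux.abs_min_sub_min (a₁ + (i:ℝ)) (a₁ + ((i:ℝ) + 1)) b₁
      have e : |(a₁ + (i:ℝ)) - (a₁ + ((i:ℝ) + 1))| = 1 := by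
        rw [show (a₁ + (i:ℝ)) - (a₁ + ((i:ℝ) + 1)) = -1 by ring]
        norm_num
      rw [e] at hmm
      linarith
    rcases lt_or_ge i (k₁ + k₂) with h' | h'
    · rw [ceq₂ i h h'.le, ceq₂ (i + 1) (by omega) h']
      have hk : 0 < k₂ := by omega
      have hk2pos : (0:ℝ) < (k₂:ℝ) := by exact_mod_cast hk
      have hmem1 := hσmem (i - k₁) (by omega)
      have hmem2 := hσmem (i + 1 - k₁) (by omega)
      have hquasi := (hf _ hmem1 _ hmem2).2
      refine le_trans hquasi ?_
      have ecast : ((i + 1 - k₁ : ℕ) : ℝ) = ((i - k₁ : ℕ) : ℝ) + 1 := by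
        have e : i + 1 - k₁ = (i - k₁) + 1 := by omega
        rw [e]; push_cast; ring
      rw [ecast]
      have habs : |s + ((i - k₁:ℕ):ℝ) * (t - s) / k₂ -
          (s + (((i - k₁:ℕ):ℝ) + 1) * (t - s) / k₂)| ≤ 1 := by
        rw [show s + ((i - k₁:ℕ):ℝ) * (t - s) / k₂ -
            (s + (((i - k₁:ℕ):ℝ) + 1) * (t - s) / k₂) = -((t - s) / k₂) by ring, abs_neg,
          abs_div, abs_of_pos hk2pos, div_le_one hk2pos]
        exact hk₂L
      linarith [mul_le_mul_of_nonneg_left habs hΛ0.le]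
    · rw [ceq₃ i (by omega), ceq₃ (i + 1) (by omega)]
      have hr1 : (0:ℝ) ≤ ((n - i : ℕ):ℝ) := Nat.cast_nonneg _
      have hr2 : (0:ℝ) ≤ ((n - (i+1) : ℕ):ℝ) := Nat.cast_nonneg _
      have hm1 : max a₃ (b₃ - ((n - i : ℕ):ℝ)) ∈ Icc a₃ b₃ :=
        ⟨le_max_left _ _, max_le hab₃ (by linarith)⟩
      have hm2 : max a₃ (b₃ - ((n - (i+1) : ℕ):ℝ)) ∈ Icc a₃ b₃ :=
        ⟨le_max_left _ _, max_le hab₃ (by linarith)⟩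
      rw [hgeo₃ _ hm1 _ hm2]
      have hmm := MorseAux.abs_max_sub_max (b₃ - ((n - i : ℕ):ℝ)) (b₃ - ((n - (i+1) : ℕ):ℝ)) a₃
      have ecast : ((n - i : ℕ) : ℝ) = ((n - (i+1) : ℕ) : ℝ) + 1 := by
        have e : n - i = (n - (i+1)) + 1 := by omega
        rw [e]; push_cast; ring
      have e : |(b₃ - ((n - i : ℕ):ℝ)) - (b₃ - ((n - (i+1) : ℕ):ℝ))| = 1 := by
        rw [ecast, show (b₃ - (((n - (i+1) : ℕ):ℝ) + 1)) - (b₃ - ((n - (i+1) : ℕ):ℝ)) = -1 by ring]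
        norm_num
      rw [e] at hmm
      linarith
  have hlow : ∀ i ≤ n, D - 1 ≤ dist (g u₀) (c i) := by
    intro i hi
    have hi0 : (0:ℝ) ≤ (i:ℝ) := Nat.cast_nonneg i
    rcases le_or_gt i k₁ with h | h
    · rw [ceq₁ i h]
      have hθI : min (a₁ + (i:ℝ)) b₁ ∈ Icc a₁ b₁ :=
        ⟨le_min (by linarith) hab₁, min_le_right _ _⟩
      have hd1 : dist (g u₁) (f₁ (min (a₁ + (i:ℝ)) b₁)) ≤ b₁ - a₁ := by
        rw [← hf₁a, hgeo₁ a₁ ⟨le_refl _, hab₁⟩ _ hθI, abs_of_nonpos (by linarith [hθI.1])]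
        linarith [hθI.2]
      rcases hs2 with h2 | h2
      · have hL : b₁ - a₁ ≤ D + 1 := by rw [← hL₁]; exact hsd
        have htr := dist_triangle (g u₀) (f₁ (min (a₁ + (i:ℝ)) b₁)) (g u₁)
        have hcm : dist (f₁ (min (a₁ + (i:ℝ)) b₁)) (g u₁) =
            dist (g u₁) (f₁ (min (a₁ + (i:ℝ)) b₁)) := dist_comm _ _
        linarith
      · have hb₁ : b₁ - a₁ = 0 := by rw [← hL₁, h2]
        have hθa : min (a₁ + (i:ℝ)) b₁ = a₁ := le_antisymm (by linarith [hθI.2]) hθI.1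
        have hgu : g u₁ = f s := by
          have := dist_eq_zero.mp h2
          exact this
        rw [hθa, hf₁a, hgu]
        have hDd : D ≤ dist (g u₀) (f s) := by
          rw [hDdef]; exact Metric.infDist_le_dist_of_mem ⟨s, hsI, rfl⟩
        linarith
    rcases le_or_gt i (k₁ + k₂) with h' | h'
    · rw [ceq₂ i h.le h']
      have hDd : D ≤ dist (g u₀) (f (s + ((i - k₁ : ℕ):ℝ) * (t - s) / k₂)) := by
        rw [hDdef]; exact Metric.infDist_le_dist_of_mem ⟨_, hσmem (i - k₁) (by omega), rfl⟩
      linarith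
    · rw [ceq₃ i (by omega)]
      have hr1 : (0:ℝ) ≤ ((n - i : ℕ):ℝ) := Nat.cast_nonneg _
      have hθI : max a₃ (b₃ - ((n - i : ℕ):ℝ)) ∈ Icc a₃ b₃ :=
        ⟨le_max_left _ _, max_le hab₃ (by linarith)⟩
      have hd3 : dist (f₃ (max a₃ (b₃ - ((n - i : ℕ):ℝ)))) (g u₂) ≤ b₃ - a₃ := by
        rw [← hf₃b, hgeo₃ _ hθI b₃ ⟨hab₃, le_refl _⟩, abs_of_nonpos (by linarith [hθI.2])]
        linarith [hθI.1]
      rcases ht2 with h2 | h2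
      · have hL : b₃ - a₃ ≤ D + 1 := by rw [← hL₃]; exact htd
        have htr := dist_triangle (g u₀) (f₃ (max a₃ (b₃ - ((n - i : ℕ):ℝ)))) (g u₂)
        linarith
      · have hb₃ : b₃ - a₃ = 0 := by rw [← hL₃, h2]
        have hθa : max a₃ (b₃ - ((n - i : ℕ):ℝ)) = a₃ :=
          le_antisymm (max_le (le_refl _) (by linarith)) (le_max_left _ _)
        rw [hθa, hf₃a]
        have hDd : D ≤ dist (g u₀) (f t) := by
          rw [hDdef]; exact Metric.infDist_le_dist_of_mem ⟨t, htI, rfl⟩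
        linarith
  have hn1 : 1 ≤ n := by
    by_contra hcon
    have hk10 : k₁ = 0 := by omega
    have hk20 : k₂ = 0 := by omega
    have hk30 : k₃ = 0 := by omega
    have hL1z : dist (g u₁) (f s) = 0 := by
      rw [hk10] at hk₁L
      have : b₁ - a₁ ≤ 0 := by exact_mod_cast hk₁L
      have h5 := dist_nonneg (x := g u₁) (y := f s)
      rw [hL₁]
      linarith
    have hstz : s = t := by
      rw [hk20] at hk₂L
      have h5 : |t - s| ≤ 0 := by exact_mod_cast hk₂L
      have h6 := abs_nonneg (t - s)
      have := abs_eq_zero.mp (le_antisymm h5 h6)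
      linarith
    have hL3z : dist (f t) (g u₂) = 0 := by
      rw [hk30] at hk₃L
      have : b₃ - a₃ ≤ 0 := by exact_mod_cast hk₃L
      have h5 := dist_nonneg (x := f t) (y := g u₂)
      rw [hL₃]
      linarith
    have hDle : D ≤ dist (g u₀) (f s) := by
      rw [hDdef]; exact Metric.infDist_le_dist_of_mem ⟨s, hsI, rfl⟩
    have h1 := dist_triangle (g u₀) (g u₁) (f s)
    have h2 : dist (g u₀) (g u₁) = u₀ - u₁ := by
      rw [hg u₀ hu₀ u₁ hu₁I, abs_of_nonneg (by linarith)]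
    have h3 : dist (g u₁) (g u₂) = u₂ - u₁ := by
      rw [hg u₁ hu₁I u₂ hu₂I, abs_of_nonpos (by linarith)]
      ring
    have h4 := dist_triangle4 (g u₁) (f s) (f t) (g u₂)
    have h5 : dist (f s) (f t) = 0 := by rw [hstz, dist_self]
    linarith
  have hgeoR : IsGeodesicOn g u₁ u₂ := fun x hx y hy =>
    hg x ⟨le_trans hu₁I.1 hx.1, le_trans hx.2 hu₂I.2⟩ y
      ⟨le_trans hu₁I.1 hy.1, le_trans hy.2 hu₂I.2⟩
  obtain ⟨i, hi, hdisti⟩ := MorseAux.chain_lemma hδ hgeo hhyp n hn1 c hgap g u₁ u₂ hgeoR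
    hc0.symm hcn.symm (g u₀) ⟨u₀, ⟨hu₁0, hu₂0⟩, rfl⟩
  have hkey : D - 1 ≤ δ * (Nat.clog 2 n) + (Λ + C) := le_trans (hlow i hi) hdisti
  -- counting
  have hst : |t - s| ≤ Λ * (dist (f s) (f t) + C) := by
    have hq := (hf s hsI t htI).1
    have h' : (1/Λ) * |s - t| ≤ dist (f s) (f t) + C := by linarith
    have h'' := mul_le_mul_of_nonneg_left h' hΛ0.le
    have e : Λ * ((1/Λ) * |s - t|) = |s - t| := by field_simp
    rw [e] at h''
    rw [abs_sub_comm]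
    exact h''
  have hg12 : dist (g u₁) (g u₂) ≤ 4 * D := by
    rw [hg u₁ hu₁I u₂ hu₂I, abs_of_nonpos (by linarith)]
    linarith
  have hfst : dist (f s) (f t) ≤ 6 * D + 2 := by
    have h4 := dist_triangle4 (f s) (g u₁) (g u₂) (f t)
    have e1 : dist (f s) (g u₁) = dist (g u₁) (f s) := dist_comm _ _
    have e2 : dist (g u₂) (f t) = dist (f t) (g u₂) := dist_comm _ _
    linarith
  have hn_le : (n : ℝ) ≤ (6*Λ+2) * D + (2*Λ + Λ*C + 5) := by
    have hb1 : b₁ - a₁ ≤ D + 1 := by rw [← hL₁]; exact hsd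
    have hb3 : b₃ - a₃ ≤ D + 1 := by rw [← hL₃]; exact htd
    have h2 : (k₂:ℝ) ≤ Λ * (6*D + 2 + C) + 1 := by
      have hmono := mul_le_mul_of_nonneg_left
        (show dist (f s) (f t) + C ≤ 6*D+2+C by linarith) hΛ0.le
      linarith
    have hcast : (n:ℝ) = (k₁:ℝ) + k₂ + k₃ := by rw [hndef]; push_cast; ring
    rw [hcast]
    linarith
  have hlog2 : 0 < Real.log 2 := Real.log_pos (by norm_num)
  have hαβpos : (0:ℝ) < (6*Λ+2) * D + (2*Λ + Λ*C + 5) := by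
    have e1 := mul_nonneg hΛ0.le hD0
    have e2 := mul_nonneg hΛ0.le hC
    linarith
  have hn1R : (1:ℝ) ≤ (n:ℝ) := by exact_mod_cast hn1
  have hclogR : (Nat.clog 2 n : ℝ) ≤
      Real.log ((6*Λ+2) * D + (2*Λ + Λ*C + 5)) / Real.log 2 + 1 := by
    have h1 := MorseAux.clog_le_real hn1
    have h2 : Real.log n ≤ Real.log ((6*Λ+2) * D + (2*Λ + Λ*C + 5)) :=
      Real.log_le_log (by linarith) hn_le
    have h3 := (div_le_div_iff_of_pos_right hlog2).mpr h2
    linarith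
  have hsqrt : Real.log ((6*Λ+2) * D + (2*Λ + Λ*C + 5)) ≤
      2 * (Real.sqrt (6*Λ+2) * Real.sqrt D + Real.sqrt (2*Λ + Λ*C + 5)) := by
    have hy0 : (0:ℝ) < (6*Λ+2) * D + (2*Λ + Λ*C + 5) := hαβpos
    have h1 : Real.log ((6*Λ+2) * D + (2*Λ + Λ*C + 5)) =
        2 * Real.log (Real.sqrt ((6*Λ+2) * D + (2*Λ + Λ*C + 5))) := by
      rw [Real.log_sqrt hy0.le]; ring
    have h2 : Real.log (Real.sqrt ((6*Λ+2) * D + (2*Λ + Λ*C + 5))) ≤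
        Real.sqrt ((6*Λ+2) * D + (2*Λ + Λ*C + 5)) - 1 :=
      Real.log_le_sub_one_of_pos (Real.sqrt_pos.mpr hy0)
    have h3 : Real.sqrt ((6*Λ+2) * D + (2*Λ + Λ*C + 5)) ≤
        Real.sqrt ((6*Λ+2) * D) + Real.sqrt (2*Λ + Λ*C + 5) :=
      MorseAux.sqrt_add_le (mul_nonneg (by linarith) hD0) (by linarith [mul_nonneg hΛ0.le hC])
    have h4 : Real.sqrt ((6*Λ+2) * D) = Real.sqrt (6*Λ+2) * Real.sqrt D :=
      Real.sqrt_mul (by linarith) D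
    rw [h4] at h3
    linarith
  set K := 2 * δ * Real.sqrt (6 * Λ + 2) / Real.log 2 with hKdef
  set L := 1 + δ + Λ + C + 2 * δ * Real.sqrt (2 * Λ + Λ * C + 5) / Real.log 2 with hLdef
  clear_value K L
  have hKnn : 0 ≤ K := by
    rw [hKdef]
    exact div_nonneg (mul_nonneg (by linarith) (Real.sqrt_nonneg _)) hlog2.le
  have hLnn : 0 ≤ L := by
    rw [hLdef]
    have h1 : (0:ℝ) ≤ 2 * δ * Real.sqrt (2 * Λ + Λ * C + 5) / Real.log 2 :=
      div_nonneg (mul_nonneg (by linarith) (Real.sqrt_nonneg _)) hlog2.le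
    linarith
  have hDK : D ≤ K * Real.sqrt D + L := by
    have h1 : δ * (Nat.clog 2 n : ℝ) ≤
        δ * (Real.log ((6*Λ+2) * D + (2*Λ + Λ*C + 5)) / Real.log 2 + 1) :=
      mul_le_mul_of_nonneg_left hclogR hδ
    have h2 : Real.log ((6*Λ+2) * D + (2*Λ + Λ*C + 5)) / Real.log 2 ≤
        2 * (Real.sqrt (6*Λ+2) * Real.sqrt D + Real.sqrt (2*Λ + Λ*C + 5)) / Real.log 2 :=
      (div_le_div_iff_of_pos_right hlog2).mpr hsqrt
    have h3 := mul_le_mul_of_nonneg_left h2 hδ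
    have e : δ * (2 * (Real.sqrt (6*Λ+2) * Real.sqrt D + Real.sqrt (2*Λ + Λ*C + 5)) / Real.log 2)
        = K * Real.sqrt D + (L - (1 + δ + Λ + C)) := by
      rw [hKdef, hLdef]
      field_simp
      ring
    rw [e] at h3
    have hA : D - 1 ≤ δ * (Real.log ((6*Λ+2) * D + (2*Λ + Λ*C + 5)) / Real.log 2 + 1) + (Λ + C) := by
      linarith
    have hB : δ * (Real.log ((6*Λ+2) * D + (2*Λ + Λ*C + 5)) / Real.log 2 + 1) =
        δ * (Real.log ((6*Λ+2) * D + (2*Λ + Λ*C + 5)) / Real.log 2) + δ := by ring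
    rw [hB] at hA
    linarith
  have hsqD := Real.sq_sqrt hD0
  have hquad : Real.sqrt D ≤ K + Real.sqrt L := by
    refine MorseAux.le_add_sqrt (Real.sqrt_nonneg D) hKnn hLnn ?_
    rw [hsqD]
    exact hDK
  have hfin : D ≤ (K + Real.sqrt L) ^ 2 := by
    calc D = Real.sqrt D ^ 2 := hsqD.symm
      _ ≤ (K + Real.sqrt L) ^ 2 := pow_le_pow_left₀ (Real.sqrt_nonneg D) hquad 2
  rw [hKdef, hLdef] at hfin
  exact le_trans hfin (le_max_right _ _)

set_option maxHeartbeats 1000000 in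
/-- The Morse lemma: in a `δ`-hyperbolic geodesic metric space, there is a constant `M`
depending only on `δ`, `Λ` and `C` such that any `(Λ,C)`-quasi-geodesic segment lies
within Hausdorff distance `M` of any geodesic joining its endpoints. -/
theorem morse_lemma (δ Λ C : ℝ) (hδ : 0 ≤ δ) (hΛ : 1 ≤ Λ) (hC : 0 ≤ C) :
    ∃ M : ℝ, ∀ (X : Type) [MetricSpace X], IsGeodesicSpace X → IsDeltaHyperbolic X δ →
      ∀ (f : ℝ → X) (a b : ℝ), a ≤ b → IsQuasiGeodesicOn Λ C f a b →
      ∀ (g : ℝ → X) (a' b' : ℝ), a' ≤ b' → IsGeodesicOn g a' b' →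
        g a' = f a → g b' = f b →
        Metric.hausdorffDist (f '' Icc a b) (g '' Icc a' b') ≤ M := by
  set M1 := morseM1 δ Λ C with hM1def
  have hM1 : 1 ≤ M1 := one_le_morseM1 δ Λ C
  clear_value M1
  refine ⟨max (M1 + 2) (Λ * (Λ * (2 * (M1 + 2) + C)) + C + M1 + 2), ?_⟩
  intro X _ hgeo hhyp f a b hab hf g a' b' hab' hg hga hgb
  have hΛ0 : (0:ℝ) < Λ := by linarith
  have hstep1 := step1 hδ hΛ hC hgeo hhyp hab hf hab' hg hga hgb
  rw [← hM1def] at hstep1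
  have hfab : (f '' Icc a b).Nonempty := ⟨f a, a, ⟨le_refl a, hab⟩, rfl⟩
  apply Metric.hausdorffDist_le_of_mem_dist
  · exact le_trans (by linarith) (le_max_left _ _)
  · -- every point of the quasi-geodesic is close to the geodesic
    rintro x ⟨t, ht, rfl⟩
    have hAne : (f '' Icc a t).Nonempty := ⟨f a, a, ⟨le_refl a, ht.1⟩, rfl⟩
    have hBne : (f '' Icc t b).Nonempty := ⟨f t, t, ⟨le_refl t, ht.2⟩, rfl⟩
    set A : Set ℝ := Icc a' b' ∩ (fun u => Metric.infDist (g u) (f '' Icc a t)) ⁻¹' Iic (M1 + 1)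
      with hAdef
    set B : Set ℝ := Icc a' b' ∩ (fun u => Metric.infDist (g u) (f '' Icc t b)) ⁻¹' Iic (M1 + 1)
      with hBdef
    have hAclosed : IsClosed A :=
      (contOn_infDist hg (f '' Icc a t)).preimage_isClosed_of_isClosed isClosed_Icc isClosed_Iic
    have hBclosed : IsClosed B :=
      (contOn_infDist hg (f '' Icc t b)).preimage_isClosed_of_isClosed isClosed_Icc isClosed_Iic
    have hcover : Icc a' b' ⊆ A ∪ B := by
      intro u hu
      have h1 : Metric.infDist (g u) (f '' Icc a b) < M1 + 1 :=
        lt_of_le_of_lt (hstep1 u hu) (by linarith)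
      obtain ⟨y, hy, hdy⟩ := (Metric.infDist_lt_iff hfab).mp h1
      obtain ⟨σ, hσ, rfl⟩ := hy
      rcases le_total σ t with hσt | hσt
      · refine mem_union_left _ (mem_inter hu ?_)
        simp only [mem_preimage, mem_Iic]
        exact le_trans (Metric.infDist_le_dist_of_mem ⟨σ, ⟨hσ.1, hσt⟩, rfl⟩) hdy.le
      · refine mem_union_right _ (mem_inter hu ?_)
        simp only [mem_preimage, mem_Iic]
        exact le_trans (Metric.infDist_le_dist_of_mem ⟨σ, ⟨hσt, hσ.2⟩, rfl⟩) hdy.le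
    have hAmem : (Icc a' b' ∩ A).Nonempty := by
      refine ⟨a', ⟨left_mem_Icc.mpr hab', left_mem_Icc.mpr hab', ?_⟩⟩
      have : Metric.infDist (g a') (f '' Icc a t) = 0 := by
        rw [hga]
        exact Metric.infDist_zero_of_mem ⟨a, ⟨le_refl a, ht.1⟩, rfl⟩
      simp only [mem_preimage, mem_Iic, this]
      linarith
    have hBmem : (Icc a' b' ∩ B).Nonempty := by
      refine ⟨b', ⟨right_mem_Icc.mpr hab', right_mem_Icc.mpr hab', ?_⟩⟩
      have : Metric.infDist (g b') (f '' Icc t b) = 0 := by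
        rw [hgb]
        exact Metric.infDist_zero_of_mem ⟨b, ⟨ht.2, le_refl b⟩, rfl⟩
      simp only [mem_preimage, mem_Iic, this]
      linarith
    obtain ⟨u, huI, huA, huB⟩ :=
      (isPreconnected_closed_iff.mp isPreconnected_Icc) A B hAclosed hBclosed hcover hAmem hBmem
    have h1 : Metric.infDist (g u) (f '' Icc a t) < M1 + 2 :=
      lt_of_le_of_lt huA.2 (by linarith)
    obtain ⟨y1, hy1, hdy1⟩ := (Metric.infDist_lt_iff hAne).mp h1
    obtain ⟨s₁, hs₁, rfl⟩ := hy1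
    have h2 : Metric.infDist (g u) (f '' Icc t b) < M1 + 2 :=
      lt_of_le_of_lt huB.2 (by linarith)
    obtain ⟨y2, hy2, hdy2⟩ := (Metric.infDist_lt_iff hBne).mp h2
    obtain ⟨s₂, hs₂, rfl⟩ := hy2
    have hs₁I : s₁ ∈ Icc a b := ⟨hs₁.1, le_trans hs₁.2 ht.2⟩
    have hs₂I : s₂ ∈ Icc a b := ⟨le_trans ht.1 hs₂.1, hs₂.2⟩
    have hd12 : dist (f s₁) (f s₂) ≤ 2 * (M1 + 2) := by
      have := dist_triangle (f s₁) (g u) (f s₂)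
      have e1 : dist (f s₁) (g u) = dist (g u) (f s₁) := dist_comm _ _
      linarith
    have hss : |s₁ - s₂| ≤ Λ * (dist (f s₁) (f s₂) + C) := by
      have hq := (hf s₁ hs₁I s₂ hs₂I).1
      have h' : (1/Λ) * |s₁ - s₂| ≤ dist (f s₁) (f s₂) + C := by linarith
      have h'' := mul_le_mul_of_nonneg_left h' hΛ0.le
      have e : Λ * ((1/Λ) * |s₁ - s₂|) = |s₁ - s₂| := by field_simp
      rw [e] at h''
      exact h''
    have hts₁ : |t - s₁| ≤ |s₁ - s₂| := by
      rw [abs_of_nonneg (by linarith [hs₁.2] : (0:ℝ) ≤ t - s₁),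
        abs_of_nonpos (by linarith [hs₁.2, hs₂.1] : s₁ - s₂ ≤ 0)]
      linarith [hs₂.1]
    have hq2 := (hf t ht s₁ hs₁I).2
    have hfinal : dist (f t) (g u) ≤ Λ * (Λ * (2 * (M1 + 2) + C)) + C + M1 + 2 := by
      have htr := dist_triangle (f t) (f s₁) (g u)
      have e1 : dist (f s₁) (g u) = dist (g u) (f s₁) := dist_comm _ _
      have hmono1 : Λ * |t - s₁| ≤ Λ * |s₁ - s₂| := mul_le_mul_of_nonneg_left hts₁ hΛ0.le
      have hmono2 : Λ * |s₁ - s₂| ≤ Λ * (Λ * (dist (f s₁) (f s₂) + C)) :=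
        mul_le_mul_of_nonneg_left hss hΛ0.le
      have hmono3 : Λ * (dist (f s₁) (f s₂) + C) ≤ Λ * (2 * (M1 + 2) + C) :=
        mul_le_mul_of_nonneg_left (by linarith) hΛ0.le
      have hmono4 : Λ * (Λ * (dist (f s₁) (f s₂) + C)) ≤ Λ * (Λ * (2 * (M1 + 2) + C)) :=
        mul_le_mul_of_nonneg_left hmono3 hΛ0.le
      linarith
    exact ⟨g u, ⟨u, huI, rfl⟩, le_trans hfinal (le_max_right _ _)⟩
  · -- every point of the geodesic is close to the quasi-geodesic
    rintro y ⟨u, hu, rfl⟩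
    have h1 : Metric.infDist (g u) (f '' Icc a b) < M1 + 2 :=
      lt_of_le_of_lt (hstep1 u hu) (by linarith)
    obtain ⟨z, hz, hdz⟩ := (Metric.infDist_lt_iff hfab).mp h1
    exact ⟨z, hz, le_trans hdz.le (le_max_left _ _)⟩
end
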